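/- arXiv:1211.1319 — 2 statements merged into one kernel-verified Lean document; each statement's English description precedes it below -/
import Mathlib

section
/- Let G be a finite simple undirected graph with n vertices and m edges, and let 𝕊_cyc be the system of all orientations d of G such that G⃗^d contains a directed cycle. Then: (i) vc(¬𝕊_cyc) = n − k, where k is the number of connected components of G; (ii) if G contains a cycle, then dvc(𝕊_cyc) = m − c, where c is the number of edges of a smallest cycle in G. -/
/-- `𝕊` shatters `Y ⊆ X`: for every `f ∈ {0,1}^Y` there is `g ∈ {0,1}^{X−Y}` with `g⋆f ∈ S`;
equivalently, every `f : α → Bool` agrees on `Y` with some member of `S`. -/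
def Shatters {α : Type*} (S : Set (α → Bool)) (Y : Set α) : Prop :=
  ∀ f : α → Bool, ∃ h ∈ S, Set.EqOn h f Y

/-- `𝕊` strongly shatters `Y ⊆ X`: there is `g ∈ {0,1}^{X−Y}` such that for every
`f ∈ {0,1}^Y`, `g⋆f ∈ S` (here `g⋆f` is expressed as the member `h` of `S` agreeing
with `f` on `Y` and with `g` on `Yᶜ`). -/
def StronglyShatters {α : Type*} (S : Set (α → Bool)) (Y : Set α) : Prop :=
  ∃ g : α → Bool, ∀ f : α → Bool, ∃ h ∈ S, Set.EqOn h f Y ∧ Set.EqOn h g Yᶜ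

/-- The family of sets shattered by the system. -/
def str {α : Type*} (S : Set (α → Bool)) : Set (Set α) :=
  {Y | Shatters S Y}

/-- The family of sets strongly shattered by the system. -/
def sstr {α : Type*} (S : Set (α → Bool)) : Set (Set α) :=
  {Y | StronglyShatters S Y}


/-- The VC-dimension of a system: the maximum cardinality of a shattered set. -/
noncomputable def vcNat {α : Type*} (S : Set (α → Bool)) : ℕ :=
  sSup {n | ∃ Y : Set α, Shatters S Y ∧ Y.ncard = n}

/-- The dual VC-dimension of a system: the maximum cardinality of a strongly
shattered set. -/
noncomputable def dvcNat {α : Type*} (S : Set (α → Bool)) : ℕ :=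
  sSup {n | ∃ Y : Set α, StronglyShatters S Y ∧ Y.ncard = n}


/-- The arc relation of the digraph obtained by orienting the edges of `X ⊆ E(G)`
according to `d` (relative to the reference orientation `ρ`): `d e = false` keeps
the reference direction `(ρ e).1 → (ρ e).2`, `d e = true` reverses it. -/
def arcsOn {V : Type*} (G : SimpleGraph V) (ρ : Sym2 V → V × V)
    (X : Set G.edgeSet) (d : G.edgeSet → Bool) : V → V → Prop :=
  fun u v => ∃ e : G.edgeSet, e ∈ X ∧
    ((d e = false ∧ ρ e.val = (u, v)) ∨ (d e = true ∧ ρ e.val = (v, u)))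

/-- The arc relation of the digraph `G⃗^d` obtained by orienting all edges of `G`
according to `d`. -/
def arcs {V : Type*} (G : SimpleGraph V) (ρ : Sym2 V → V × V)
    (d : G.edgeSet → Bool) : V → V → Prop :=
  arcsOn G ρ Set.univ d

/-- A digraph contains a directed cycle iff some vertex lies on a closed directed
walk of positive length. -/
def HasDiCycle {V : Type*} (R : V → V → Prop) : Prop :=
  ∃ v, Relation.TransGen R v v

/-- The subgraph `G_X` of `G` on the full vertex set, with edge set `X ⊆ E(G)`. -/
def subgraphOf {V : Type*} (G : SimpleGraph V) (X : Set G.edgeSet) : SimpleGraph V :=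
  SimpleGraph.fromEdgeSet (Subtype.val '' X)

/-!
Every cycle `C` of `G` has a cyclic orientation, and an orientation agreeing with it on `C` has a
directed cycle. Conversely, an orientation of a forest `X` has no directed cycle: a closed directed
walk `v → w ⇝ v` would make the unique `w`–`v` path of `X` the single edge `w → v`, which is
already oriented `v → w`. So the reachability order of the orientation extends to a linear order
of `V`, and orienting every edge upwards in that order is acyclic and agrees with the given
orientation on `X`. Hence `Y` is shattered by the acyclic orientations iff `Y` is a forest, and
strongly shattered by the cyclic ones iff `E - Y` contains a cycle. A forest with `k'` components
has `n - k'` edges, so spanning forests are the largest forests, and the largest `Y` whose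
complement contains a cycle is the complement of a shortest cycle.
-/

open Finset SimpleGraph Relation

namespace SimpleGraph

variable {V : Type*}

theorem transGen_iff_exists_walk {H : SimpleGraph V} {R : V → V → Prop}
    (hR : ∀ u v, R u v → H.Adj u v) {u v : V} :
    TransGen R u v ↔ ∃ p : H.Walk u v, ¬p.Nil ∧ ∀ d ∈ p.darts, R d.fst d.snd := by
  constructor
  · intro h
    induction h using TransGen.head_induction_on with
    | single h => exact ⟨.cons (hR _ _ h) .nil, by simp, by simpa using h⟩
    | head h _ ih =>
      obtain ⟨p, -, hp⟩ := ih
      exact ⟨.cons (hR _ _ h) p, by simp, by simpa [h] using hp⟩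
  · rintro ⟨p, hnil, hp⟩
    induction p with
    | nil => simp at hnil
    | @cons a b c hab q ih =>
      have hRab : R a b := hp ⟨(a, b), hab⟩ List.mem_cons_self
      by_cases hq : q.Nil
      · obtain rfl := hq.eq
        exact .single hRab
      · exact .head hRab (ih hq fun d hd => hp d (by simp [hd]))

theorem IsAcyclic.not_transGen_self {H : SimpleGraph V} (hH : H.IsAcyclic) {R : V → V → Prop}
    (hR : ∀ u v, R u v → H.Adj u v) (hasymm : ∀ u v, R u v → ¬R v u) (v : V) :
    ¬TransGen R v v := by
  classical
  rw [transGen_iff_exists_walk hR]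
  rintro ⟨p, hnil, hp⟩
  cases p with
  | nil => simp at hnil
  | @cons _ w _ hvw q =>
    have hpath : q.bypass = .cons hvw.symm .nil :=
      congrArg Subtype.val ((hH.subsingleton_path w v).elim ⟨_, q.bypass_isPath⟩ (.singleton _))
    have hwv : R w v := by
      refine hp ⟨(w, v), hvw.symm⟩ (List.mem_cons_of_mem _ (q.darts_bypass_subset_darts ?_))
      simp [hpath]
    exact hasymm _ _ (hp ⟨(v, w), hvw⟩ List.mem_cons_self) hwv

lemma card_eq_sum_card_connectedComponent [Finite V] (G : SimpleGraph V)
    [Fintype G.ConnectedComponent] : Nat.card V = ∑ c : G.ConnectedComponent, Nat.card c :=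
  (Nat.card_congr (Equiv.sigmaFiberEquiv G.connectedComponentMk).symm).trans Nat.card_sigma

lemma card_edgeSet_eq_sum_connectedComponent [Finite V] (G : SimpleGraph V)
    [Fintype G.ConnectedComponent] :
    Nat.card G.edgeSet = ∑ c : G.ConnectedComponent, Nat.card c.toSimpleGraph.edgeSet := by
  classical
  have := Fintype.ofFinite V
  simp only [Nat.card_eq_fintype_card, ← edgeFinset_card]
  rw [card_eq_sum_card_fiberwise (f := fun e => G.connectedComponentMk e.out.1) (t := univ)
    fun _ _ => mem_univ _]
  refine sum_congr rfl fun c _ => ?_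
  have hc : {e ∈ G.edgeFinset | G.connectedComponentMk e.out.1 = c}
      = G.edgeFinset ∩ (c : Set V).toFinset.sym2 := by
    ext e
    induction e using Sym2.ind with
    | _ a b =>
      simp only [mem_filter, mem_inter, mem_edgeFinset, Finset.mem_sym2_iff, Set.mem_toFinset]
      refine and_congr_right fun hab => ?_
      have hmk : ∀ x ∈ s(a, b), G.connectedComponentMk x = G.connectedComponentMk a := by
        simpa using (Adj.reachable hab).symm
      rw [hmk _ (Sym2.out_fst_mem _)]
      exact ⟨fun h x hx => (hmk x hx).trans h, fun h => h a (Sym2.mem_mk_left a b)⟩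
  rw [hc, ← map_edgeFinset_induce, card_map]
  -- the sides agree up to unfolding `toSimpleGraph` and the choice of `Fintype` instances
  convert rfl <;> rfl

theorem IsAcyclic.card_edgeSet_add_card_connectedComponent [Finite V] {F : SimpleGraph V}
    (hF : F.IsAcyclic) :
    Nat.card F.edgeSet + Nat.card F.ConnectedComponent = Nat.card V := by
  have := Fintype.ofFinite F.ConnectedComponent
  rw [card_edgeSet_eq_sum_connectedComponent, card_eq_sum_card_connectedComponent F,
    Nat.card_eq_fintype_card (α := F.ConnectedComponent), ← card_univ, card_eq_sum_ones,
    ← sum_add_distrib]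
  exact sum_congr rfl fun c _ =>
    (isTree_iff_connected_and_card.1 (hF.isTree_connectedComponent c)).2

variable {G : SimpleGraph V} {u v : V} {p : G.Walk u v}

lemma Walk.IsTrail.symm_notMem_darts (hp : p.IsTrail) {d : G.Dart} (hd : d ∈ p.darts) :
    d.symm ∉ p.darts := fun hd' =>
  d.symm_ne (List.inj_on_of_nodup_map hp.edges_nodup hd' hd d.edge_symm)

lemma Walk.IsTrail.ncard_setOf_mem_edges (hp : p.IsTrail) :
    {e : G.edgeSet | e.val ∈ p.edges}.ncard = p.length := by
  classical
  rw [← Set.ncard_image_of_injective _ Subtype.val_injective, ← p.length_edges,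
    ← List.toFinset_card_of_nodup hp.edges_nodup, ← Set.ncard_coe_finset]
  congr
  ext e
  simpa using fun he => p.edges_subset_edgeSet he

end SimpleGraph

section SubgraphOf

variable {V : Type*} {G : SimpleGraph V} {X : Set G.edgeSet}

lemma subgraphOf_le (X : Set G.edgeSet) : subgraphOf G X ≤ G := by
  rw [subgraphOf, fromEdgeSet_le]
  rintro _ ⟨⟨e, -, rfl⟩, -⟩
  exact e.prop

lemma edgeSet_subgraphOf (X : Set G.edgeSet) : (subgraphOf G X).edgeSet = Subtype.val '' X := by
  rw [subgraphOf, edgeSet_fromEdgeSet, sdiff_eq_left, Set.disjoint_left]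
  rintro _ ⟨e, -, rfl⟩
  exact G.not_isDiag_of_mem_edgeSet e.prop

lemma mem_of_mem_edgeSet_subgraphOf {e : G.edgeSet} (he : e.val ∈ (subgraphOf G X).edgeSet) :
    e ∈ X := by
  rw [edgeSet_subgraphOf] at he
  obtain ⟨e', he', hee'⟩ := he
  rwa [← Subtype.ext hee']

lemma subgraphOf_setOf_mem_edgeSet {F : SimpleGraph V} (hF : F ≤ G) :
    subgraphOf G {e | e.val ∈ F.edgeSet} = F := by
  rw [← edgeSet_inj, edgeSet_subgraphOf]
  ext e
  exact ⟨fun ⟨_, he, hee⟩ => hee ▸ he, fun he => ⟨⟨e, edgeSet_mono hF he⟩, he, rfl⟩⟩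

lemma ncard_eq_card_edgeSet_subgraphOf (X : Set G.edgeSet) :
    X.ncard = Nat.card (subgraphOf G X).edgeSet := by
  rw [Nat.card_coe_set_eq, edgeSet_subgraphOf, Set.ncard_image_of_injective _ Subtype.val_injective]

lemma not_isAcyclic_subgraphOf_iff :
    ¬(subgraphOf G X).IsAcyclic ↔
      ∃ (v : V) (p : G.Walk v v), p.IsCycle ∧ ∀ e : G.edgeSet, e.val ∈ p.edges → e ∈ X := by
  simp only [IsAcyclic, not_forall, not_not]
  constructor
  · rintro ⟨v, c, hc⟩
    have hG : ∀ e ∈ c.edges, e ∈ G.edgeSet :=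
      fun e he => edgeSet_mono (subgraphOf_le X) (c.edges_subset_edgeSet he)
    refine ⟨v, c.transfer G hG, hc.transfer hG, fun e he => ?_⟩
    rw [Walk.edges_transfer] at he
    exact mem_of_mem_edgeSet_subgraphOf (c.edges_subset_edgeSet he)
  · rintro ⟨v, p, hp, hpX⟩
    have hX : ∀ e ∈ p.edges, e ∈ (subgraphOf G X).edgeSet := fun e he => by
      rw [edgeSet_subgraphOf]
      exact ⟨⟨e, p.edges_subset_edgeSet he⟩, hpX _ he, rfl⟩
    exact ⟨v, p.transfer _ hX, hp.transfer hX⟩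

end SubgraphOf

def OrientsEdges {V : Type*} (G : SimpleGraph V) (ρ : Sym2 V → V × V) : Prop :=
  ∀ e ∈ G.edgeSet, Sym2.mk (ρ e).1 (ρ e).2 = e

-- Each edge points towards its endpoint with the larger value of `f`.
def orientationOf {V L : Type*} [LinearOrder L] (G : SimpleGraph V)
    (ρ : Sym2 V → V × V) (f : V → L) (e : G.edgeSet) : Bool :=
  decide (f (ρ e).2 < f (ρ e).1)

-- Orients every edge of `p` the way `p` traverses it, which is consistent when `p` is a trail.
open Classical in
noncomputable def orientationAlong {V : Type*} {G : SimpleGraph V} (ρ : Sym2 V → V × V)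
    {u v : V} (p : G.Walk u v) (e : G.edgeSet) : Bool :=
  decide (∃ d ∈ p.darts, d.toProd = (ρ e).swap)

section Orientation

variable {V : Type*} {G : SimpleGraph V} {ρ : Sym2 V → V × V} {X : Set G.edgeSet}
  {d : G.edgeSet → Bool}

lemma OrientsEdges.val_eq_of_arc (hρ : OrientsEdges G ρ) {e : G.edgeSet} {u v : V}
    (h : (d e = false ∧ ρ e = (u, v)) ∨ (d e = true ∧ ρ e = (v, u))) : e.val = s(u, v) := by
  rcases h with ⟨-, h⟩ | ⟨-, h⟩ <;> rw [← hρ e e.prop, h]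
  exact Sym2.eq_swap

lemma OrientsEdges.adj_of_arcsOn (hρ : OrientsEdges G ρ) {u v : V} (h : arcsOn G ρ X d u v) :
    (subgraphOf G X).Adj u v := by
  obtain ⟨e, heX, he⟩ := h
  have huv : G.Adj u v := by simpa [hρ.val_eq_of_arc he] using e.prop
  rw [subgraphOf, fromEdgeSet_adj]
  exact ⟨⟨e, heX, hρ.val_eq_of_arc he⟩, huv.ne⟩

lemma OrientsEdges.not_arcsOn_symm (hρ : OrientsEdges G ρ) {u v : V} (h : arcsOn G ρ X d u v) :
    ¬arcsOn G ρ X d v u := by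
  have huv := (hρ.adj_of_arcsOn h).ne
  rintro ⟨e', -, he'⟩
  obtain ⟨e, -, he⟩ := h
  obtain rfl : e = e' :=
    Subtype.ext ((hρ.val_eq_of_arc he).trans (Sym2.eq_swap.trans (hρ.val_eq_of_arc he').symm))
  rcases he with ⟨hd, hρe⟩ | ⟨hd, hρe⟩ <;> rcases he' with ⟨hd', hρe'⟩ | ⟨hd', hρe'⟩ <;>
    simp_all [Prod.ext_iff]

lemma OrientsEdges.adj_of_arcs (hρ : OrientsEdges G ρ) {u v : V} (h : arcs G ρ d u v) :
    G.Adj u v :=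
  subgraphOf_le _ (hρ.adj_of_arcsOn h)

section LinearOrder

variable {L : Type*} [LinearOrder L] {f : V → L}

lemma OrientsEdges.lt_of_arcs_orientationOf (hρ : OrientsEdges G ρ) (hf : f.Injective)
    {u v : V} (h : arcs G ρ (orientationOf G ρ f) u v) : f u < f v := by
  have huv := hρ.adj_of_arcs h
  obtain ⟨e, -, ⟨hd, hρe⟩ | ⟨hd, hρe⟩⟩ := h <;> simp only [orientationOf, hρe] at hd
  · exact lt_of_le_of_ne (by simpa using hd) (hf.ne huv.ne)
  · simpa using hd

lemma OrientsEdges.not_hasDiCycle_orientationOf (hρ : OrientsEdges G ρ) (hf : f.Injective) :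
    ¬HasDiCycle (arcs G ρ (orientationOf G ρ f)) := by
  rintro ⟨v, hv⟩
  have : TransGen (· < ·) (f v) (f v) :=
    TransGen.lift f (fun _ _ h => hρ.lt_of_arcs_orientationOf hf h) _ _ hv
  rw [transGen_eq_self] at this
  exact this.false

lemma orientationOf_eq_of_arcsOn (hf : ∀ u v, arcsOn G ρ X d u v → f u < f v) {e : G.edgeSet}
    (he : e ∈ X) : orientationOf G ρ f e = d e := by
  cases hd : d e
  · have := hf _ _ ⟨e, he, .inl ⟨hd, rfl⟩⟩
    simpa [orientationOf] using this.le
  · simpa [orientationOf] using hf _ _ ⟨e, he, .inr ⟨hd, rfl⟩⟩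

end LinearOrder

lemma OrientsEdges.exists_acyclic_extension (hρ : OrientsEdges G ρ)
    (hX : (subgraphOf G X).IsAcyclic) (d : G.edgeSet → Bool) :
    ∃ h : G.edgeSet → Bool, Set.EqOn h d X ∧ ¬HasDiCycle (arcs G ρ h) := by
  have hR : ∀ v, ¬TransGen (arcsOn G ρ X d) v v :=
    hX.not_transGen_self (fun _ _ => hρ.adj_of_arcsOn) (fun _ _ => hρ.not_arcsOn_symm)
  let _ : PartialOrder V :=
    { le := ReflTransGen (arcsOn G ρ X d)
      le_refl := fun _ => .refl
      le_trans := fun _ _ _ => .trans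
      le_antisymm := fun a b hab hba =>
        ((reflTransGen_iff_eq_or_transGen.1 hab).resolve_right
          fun h => hR _ (h.trans_right hba)).symm }
  -- `toLinearExtension` is the identity of `V`
  have hmono : StrictMono (toLinearExtension : V →o LinearExtension V) :=
    toLinearExtension.monotone.strictMono_of_injective fun _ _ => id
  refine ⟨orientationOf G ρ toLinearExtension,
    fun e he => orientationOf_eq_of_arcsOn (fun u v h => hmono ?_) he,
    hρ.not_hasDiCycle_orientationOf fun _ _ => id⟩
  exact lt_of_le_not_ge (ReflTransGen.single h) fun h' => hR u (.head' h h')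

lemma OrientsEdges.arcs_of_mem_darts (hρ : OrientsEdges G ρ) {u v : V} {p : G.Walk u v}
    (hp : p.IsTrail) {h : G.edgeSet → Bool}
    (hh : ∀ e : G.edgeSet, e.val ∈ p.edges → h e = orientationAlong ρ p e)
    {d : G.Dart} (hd : d ∈ p.darts) : arcs G ρ h d.fst d.snd := by
  classical
  have hmem : d.edge ∈ p.edges := List.mem_map_of_mem hd
  set e : G.edgeSet := ⟨d.edge, p.edges_subset_edgeSet hmem⟩
  refine ⟨e, trivial, ?_⟩
  rw [hh e hmem, orientationAlong]
  rcases Sym2.eq_iff.1 (hρ e e.prop) with ⟨h1, h2⟩ | ⟨h1, h2⟩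
  · have hρe : ρ e = d.toProd := Prod.ext h1 h2
    refine .inl ⟨decide_eq_false ?_, hρe⟩
    rintro ⟨d', hd', hd'd⟩
    have : d' = d.symm := Dart.ext _ _ (by rw [hd'd, hρe]; rfl)
    exact hp.symm_notMem_darts hd (this ▸ hd')
  · have hρe : ρ e = d.toProd.swap := Prod.ext h1 h2
    exact .inr ⟨decide_eq_true ⟨d, hd, by rw [hρe, Prod.swap_swap]⟩, hρe⟩

lemma OrientsEdges.hasDiCycle_of_isCycle (hρ : OrientsEdges G ρ) {v : V} {p : G.Walk v v}
    (hp : p.IsCycle) {h : G.edgeSet → Bool}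
    (hh : ∀ e : G.edgeSet, e.val ∈ p.edges → h e = orientationAlong ρ p e) :
    HasDiCycle (arcs G ρ h) :=
  ⟨v, (transGen_iff_exists_walk fun _ _ => hρ.adj_of_arcs).2
    ⟨p, hp.not_nil, fun _ hd => hρ.arcs_of_mem_darts hp.isTrail hh hd⟩⟩

lemma OrientsEdges.shatters_acyclic_iff (hρ : OrientsEdges G ρ) {Y : Set G.edgeSet} :
    Shatters {d | HasDiCycle (arcs G ρ d)}ᶜ Y ↔ (subgraphOf G Y).IsAcyclic := by
  constructor
  · intro hY
    by_contra hcyc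
    obtain ⟨v, p, hp, hpY⟩ := not_isAcyclic_subgraphOf_iff.1 hcyc
    obtain ⟨h, hacyc, hh⟩ := hY (orientationAlong ρ p)
    exact hacyc (hρ.hasDiCycle_of_isCycle hp fun e he => hh (hpY e he))
  · intro hY d
    obtain ⟨h, hh, hacyc⟩ := hρ.exists_acyclic_extension hY d
    exact ⟨h, hacyc, hh⟩

lemma OrientsEdges.stronglyShatters_cyclic_iff (hρ : OrientsEdges G ρ) {Y : Set G.edgeSet} :
    StronglyShatters {d | HasDiCycle (arcs G ρ d)} Y ↔ ¬(subgraphOf G Yᶜ).IsAcyclic := by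
  classical
  constructor
  · rintro ⟨g, hg⟩ hacyc
    obtain ⟨h, hhg, hh⟩ := hρ.exists_acyclic_extension hacyc g
    obtain ⟨h', hcyc, hh'Y, hh'g⟩ := hg h
    have : h' = h := funext fun e => by
      by_cases he : e ∈ Y
      · exact hh'Y he
      · exact (hh'g he).trans (hhg he).symm
    exact hh (this ▸ hcyc)
  · intro hcyc
    obtain ⟨v, p, hp, hpY⟩ := not_isAcyclic_subgraphOf_iff.1 hcyc
    refine ⟨orientationAlong ρ p, fun f => ⟨Y.piecewise f (orientationAlong ρ p), ?_,
      Y.piecewise_eqOn _ _, Y.piecewise_eqOn_compl _ _⟩⟩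
    exact hρ.hasDiCycle_of_isCycle hp fun e he => Y.piecewise_eqOn_compl _ _ (hpY e he)

lemma OrientsEdges.isGreatest_ncard_shatters [Finite V] (hρ : OrientsEdges G ρ) :
    IsGreatest {t | ∃ Y, Shatters {d | HasDiCycle (arcs G ρ d)}ᶜ Y ∧ Y.ncard = t}
      (Nat.card V - Nat.card G.ConnectedComponent) := by
  constructor
  · obtain ⟨F, hFG, hF, hreach⟩ := G.exists_isAcyclic_reachable_eq_le
    have hFX := subgraphOf_setOf_mem_edgeSet hFG
    have hcc : Nat.card F.ConnectedComponent = Nat.card G.ConnectedComponent := by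
      unfold ConnectedComponent
      rw [hreach]
    have hcount := hF.card_edgeSet_add_card_connectedComponent
    refine ⟨_, hρ.shatters_acyclic_iff.2 (hFX ▸ hF), ?_⟩
    rw [ncard_eq_card_edgeSet_subgraphOf, hFX]
    omega
  · rintro _ ⟨Y, hY, rfl⟩
    have hcount := (hρ.shatters_acyclic_iff.1 hY).card_edgeSet_add_card_connectedComponent
    have hcc := ConnectedComponent.card_le_card_of_le (subgraphOf_le Y)
    rw [ncard_eq_card_edgeSet_subgraphOf]
    omega

lemma OrientsEdges.isGreatest_ncard_stronglyShatters [Finite V] (hρ : OrientsEdges G ρ) {c : ℕ}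
    (hc : ∃ (v : V) (p : G.Walk v v), p.IsCycle ∧ p.length = c)
    (hmin : ∀ (v : V) (p : G.Walk v v), p.IsCycle → c ≤ p.length) :
    IsGreatest {t | ∃ Y, StronglyShatters {d | HasDiCycle (arcs G ρ d)} Y ∧ Y.ncard = t}
      (Nat.card G.edgeSet - c) := by
  constructor
  · obtain ⟨v, p, hp, rfl⟩ := hc
    set C : Set G.edgeSet := {e | e.val ∈ p.edges}
    refine ⟨Cᶜ, hρ.stronglyShatters_cyclic_iff.2 (not_isAcyclic_subgraphOf_iff.2
      ⟨v, p, hp, fun e he => by simpa [C] using he⟩), ?_⟩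
    have := Cᶜ.ncard_add_ncard_compl
    rw [compl_compl, hp.isTrail.ncard_setOf_mem_edges] at this
    omega
  · rintro _ ⟨Y, hY, rfl⟩
    obtain ⟨v, p, hp, hpY⟩ := not_isAcyclic_subgraphOf_iff.1 (hρ.stronglyShatters_cyclic_iff.1 hY)
    have hlen : p.length ≤ Yᶜ.ncard :=
      hp.isTrail.ncard_setOf_mem_edges ▸ Set.ncard_le_ncard fun e he => hpY e he
    have := Y.ncard_add_ncard_compl
    have := hmin v p hp
    omega

end Orientation

/-- for the system `𝕊_cyc` of orientations of `G` containing a directed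
cycle, (i) `vc(¬𝕊_cyc) = n − k` where `k` is the number of connected components of `G`,
and (ii) if `G` contains a cycle and `c` is the length of a smallest cycle of `G`, then
`dvc(𝕊_cyc) = m − c`. -/
theorem vc_dvc_cyclic {V : Type*} [Fintype V] (G : SimpleGraph V)
    (ρ : Sym2 V → V × V) (hρ : ∀ e ∈ G.edgeSet, Sym2.mk (ρ e).1 (ρ e).2 = e)
    (n m k : ℕ) (hn : Fintype.card V = n) (hm : Nat.card G.edgeSet = m)
    (hk : Nat.card G.ConnectedComponent = k) :
    vcNat ({d : G.edgeSet → Bool | HasDiCycle (arcs G ρ d)}ᶜ) = n - k ∧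
    ∀ c : ℕ,
      (∃ (v : V) (p : G.Walk v v), p.IsCycle ∧ p.length = c) →
      (∀ (v : V) (p : G.Walk v v), p.IsCycle → c ≤ p.length) →
      dvcNat {d : G.edgeSet → Bool | HasDiCycle (arcs G ρ d)} = m - c := by
  subst hn hm hk
  refine ⟨?_, fun c hc hmin => ?_⟩
  · rw [vcNat, ← Nat.card_eq_fintype_card]
    exact (OrientsEdges.isGreatest_ncard_shatters hρ).csSup_eq
  · exact (OrientsEdges.isGreatest_ncard_stronglyShatters hρ hc hmin).csSup_eq
end

section
/- Let G be a finite simple undirected graph with n vertices, m ≥ 1 edges, and k connected components. Then the number of acyclic orientations of G is at most (m·e/(n−k))^{n−k}, where e is Euler's number. -/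
/-!
Deletion–contraction. Fix an edge `uv`. Restricting an acyclic orientation of `G` to `G - uv`
loses only the direction of `uv`, and a restriction extends acyclically in both directions only
if no directed path joins `u` and `v`; identifying `v` with `u` then yields an acyclic orientation
of `G / uv`, and different such restrictions yield different ones. So
`a(G) ≤ a(G - uv) + a(G / uv)`. Contraction lowers the rank `n - k` by one, so induction on the
number of edges gives `a(G) ≤ ∑_{i ≤ n - k} C(m, i)`. For `t ≤ m` the classical estimate
`∑_{i ≤ t} C(m, i) ≤ (m e / t)^t` follows from
`(t/m)^t ∑_{i ≤ t} C(m, i) ≤ (1 + t/m)^m ≤ e^t`.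
-/

open Relation

section

variable {V W : Type*}

open Finset in
lemma sum_range_choose_mono {M M' t t' : ℕ} (hM : M ≤ M') (ht : t ≤ t') :
    ∑ i ∈ range (t + 1), M.choose i ≤ ∑ i ∈ range (t' + 1), M'.choose i :=
  (sum_le_sum fun i _ => Nat.choose_le_choose i hM).trans
    (sum_le_sum_of_subset (range_subset_range.mpr (by omega)))

open Finset in
lemma sum_range_choose_succ_succ (M t : ℕ) :
    ∑ i ∈ range (t + 2), (M + 1).choose i =
      ∑ i ∈ range (t + 2), M.choose i + ∑ i ∈ range (t + 1), M.choose i := by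
  simp only [sum_range_succ' _ (t + 1), Nat.choose_succ_succ', sum_add_distrib,
    Nat.choose_zero_right]
  omega

open Finset in
theorem sum_range_choose_le_pow {M t : ℕ} (ht : t ≤ M) :
    (∑ i ∈ range (t + 1), (M.choose i : ℝ)) ≤ (M * Real.exp 1 / t) ^ t := by
  rcases t.eq_zero_or_pos with rfl | ht0
  · simp
  have hM : (0 : ℝ) < M := by exact_mod_cast ht0.trans_le ht
  have hMx : (M : ℝ) * (t / M) = t := by field_simp
  set x : ℝ := t / M
  have hx0 : 0 < x := by positivity
  have hx1 : x ≤ 1 := div_le_one_of_le₀ (by exact_mod_cast ht) (Nat.cast_nonneg M)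
  have key : x ^ t * ∑ i ∈ range (t + 1), (M.choose i : ℝ) ≤ Real.exp t :=
    calc x ^ t * ∑ i ∈ range (t + 1), (M.choose i : ℝ)
        ≤ ∑ i ∈ range (t + 1), x ^ i * M.choose i := by
          rw [mul_sum]
          exact sum_le_sum fun i hi => mul_le_mul_of_nonneg_right
            (pow_le_pow_of_le_one hx0.le hx1 (Nat.lt_succ_iff.mp (mem_range.mp hi))) (by positivity)
      _ ≤ ∑ i ∈ range (M + 1), x ^ i * M.choose i :=
          sum_le_sum_of_subset_of_nonneg (range_subset_range.mpr (by omega))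
            fun _ _ _ => by positivity
      _ = (x + 1) ^ M := by simp [add_pow]
      _ ≤ Real.exp x ^ M := pow_le_pow_left₀ (by positivity) (Real.add_one_le_exp x) M
      _ = Real.exp t := by rw [← Real.exp_nat_mul, hMx]
  rw [show (M : ℝ) * Real.exp 1 / t = Real.exp 1 / x by rw [← hMx]; field_simp, div_pow,
    Real.exp_one_pow, le_div_iff₀ (by positivity), mul_comm]
  exact key

lemma not_hasDiCycle_of_le {R S : V → V → Prop} (h : R ≤ S) (hS : ¬ HasDiCycle S) :
    ¬ HasDiCycle R :=
  fun ⟨x, hx⟩ => hS ⟨x, TransGen.mono h x x hx⟩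

lemma asymm_of_not_hasDiCycle {R : V → V → Prop} (hR : ¬ HasDiCycle R) {a b : V}
    (hab : R a b) : ¬ R b a :=
  fun hba => hR ⟨a, .tail (.single hab) hba⟩

lemma not_hasDiCycle_map {D : V → V → Prop} {f : V → W} {w : W}
    (hf : ∀ a b, f a = f b → a ≠ b → f a = w)
    (hpath : ∀ a b, f a = f b → ¬ TransGen D a b) :
    ¬ HasDiCycle (Relation.Map D f f) := by
  let M := Relation.Map (TransGen D) f f
  have comp : ∀ {x y z}, M x y → M y z → M x z ∨ (M x w ∧ M w z) := by
    rintro _ _ _ ⟨a, b, hab, rfl, rfl⟩ ⟨b', c, hbc, hb', rfl⟩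
    by_cases hbb : b' = b
    · subst hbb
      exact .inl ⟨a, c, hab.trans hbc, rfl, rfl⟩
    · have hw : f b = w := hf b b' hb'.symm (Ne.symm hbb)
      exact .inr ⟨⟨a, b, hab, rfl, hw⟩, ⟨b', c, hbc, hb'.trans hw, rfl⟩⟩
  have irrefl : ∀ x, ¬ M x x := by
    rintro _ ⟨a, b, hab, rfl, h⟩
    exact hpath a b h.symm hab
  have single : ∀ {x y}, Relation.Map D f f x y → M x y :=
    fun ⟨a, b, h, ha, hb⟩ => ⟨a, b, .single h, ha, hb⟩
  -- a directed path of the image passes through `w` at most once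
  have lift : ∀ {x y}, TransGen (Relation.Map D f f) x y → M x y ∨ (M x w ∧ M w y) := by
    intro x y h
    induction h with
    | single h => exact .inl (single h)
    | tail _ hyz ih =>
      rcases ih with hxy | ⟨hxw, hwy⟩
      · exact comp hxy (single hyz)
      · exact .inr ⟨hxw, (comp hwy (single hyz)).resolve_right fun h => irrefl w h.1⟩
  rintro ⟨x, hx⟩
  rcases lift hx with h | ⟨hxw, hwx⟩
  · exact irrefl x h
  · exact irrefl w ((comp hwx hxw).elim id (·.1))

lemma eq_or_of_update_id_eq {u v a b : V} [DecidableEq V]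
    (h : Function.update id v u a = Function.update id v u b) :
    a = b ∨ (a = u ∧ b = v) ∨ (a = v ∧ b = u) := by
  simp only [Function.update_apply, id] at h
  split_ifs at h <;> grind

def addArc (D : V → V → Prop) (u v : V) : V → V → Prop :=
  fun a b => D a b ∨ (a = u ∧ b = v)

lemma not_transGen_of_not_hasDiCycle_addArc {D : V → V → Prop} {u v : V}
    (h : ¬ HasDiCycle (addArc D v u)) : ¬ TransGen D u v :=
  fun huv => h ⟨u, (TransGen.mono (fun _ _ => .inl) _ _ huv).tail (.inr ⟨rfl, rfl⟩)⟩

namespace SimpleGraph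

structure IsOrientation (G : SimpleGraph V) (D : V → V → Prop) : Prop where
  adj : ∀ ⦃a b⦄, D a b → G.Adj a b
  asymm : ∀ ⦃a b⦄, D a b → ¬ D b a
  total : ∀ ⦃a b⦄, G.Adj a b → D a b ∨ D b a

def acyclicOrientations (G : SimpleGraph V) : Set (V → V → Prop) :=
  {D | G.IsOrientation D ∧ ¬ HasDiCycle D}

variable {G H : SimpleGraph V} {D D' : V → V → Prop}

namespace IsOrientation

lemma iff_not (hD : G.IsOrientation D) {a b : V} (h : G.Adj a b) : D a b ↔ ¬ D b a :=
  ⟨fun hab => hD.asymm hab, fun hba => (hD.total h).resolve_right hba⟩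

lemma eq_of_le (hD : G.IsOrientation D) (hD' : G.IsOrientation D') (h : D ≤ D') : D = D' := by
  funext a b
  refine propext ⟨fun hab => h a b hab, fun hab => ?_⟩
  exact (hD.total (hD'.adj hab)).resolve_right fun hba => hD'.asymm hab (h b a hba)

lemma restrict (hD : G.IsOrientation D) (hHG : H ≤ G) :
    H.IsOrientation fun a b => D a b ∧ H.Adj a b where
  adj _ _ h := h.2
  asymm _ _ h h' := hD.asymm h.1 h'.1
  total _ _ h := (hD.total (hHG h)).imp (⟨·, h⟩) (⟨·, h.symm⟩)

end IsOrientation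

variable {f : V → W} {u v : V}

lemma IsOrientation.map (hD : G.IsOrientation D) (hacyc : ¬ HasDiCycle (Relation.Map D f f)) :
    (G.map f).IsOrientation (Relation.Map D f f) where
  adj := by
    rintro _ _ ⟨a, b, hab, rfl, rfl⟩
    exact ⟨fun h => hacyc ⟨f a, .single ⟨a, b, hab, rfl, h.symm⟩⟩,
      a, b, hD.adj hab, rfl, rfl⟩
  asymm _ _ := asymm_of_not_hasDiCycle hacyc
  total := by
    rintro _ _ ⟨-, a, b, h, rfl, rfl⟩
    exact (hD.total h).imp (⟨a, b, ·, rfl, rfl⟩) (⟨b, a, ·, rfl, rfl⟩)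

lemma IsOrientation.eq_of_map_eq (hD : G.IsOrientation D) (hD' : G.IsOrientation D')
    (hacyc : ¬ HasDiCycle (Relation.Map D' f f)) (h : Relation.Map D f f = Relation.Map D' f f) :
    D = D' := by
  refine hD.eq_of_le hD' fun a b hab => ?_
  have hmap : Relation.Map D' f f (f a) (f b) := h ▸ ⟨a, b, hab, rfl, rfl⟩
  exact (hD'.total (hD.adj hab)).resolve_right
    fun hba => asymm_of_not_hasDiCycle hacyc hmap ⟨b, a, hba, rfl, rfl⟩

lemma IsOrientation.eq_addArc (hD : G.IsOrientation D) (huv : D u v) :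
    D = addArc (fun a b => D a b ∧ (G.deleteEdges {s(u, v)}).Adj a b) u v := by
  funext a b
  have := hD.asymm huv
  have := @hD.adj a b
  simp only [addArc, deleteEdges_adj, Set.mem_singleton_iff, Sym2.eq_iff, eq_iff_iff]
  grind

/-- Contraction of the edge `uv`, modelled on the same vertex type: `v` is identified with `u`
and remains behind as an isolated vertex. -/
def contractEdge [DecidableEq V] (G : SimpleGraph V) (u v : V) : SimpleGraph V :=
  (G.deleteEdges {s(u, v)}).map (Function.update id v u)

lemma map_update_mem_acyclicOrientations [DecidableEq V]
    (hD : D ∈ H.acyclicOrientations) (huv : ¬ TransGen D u v) (hvu : ¬ TransGen D v u) :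
    Relation.Map D (Function.update id v u) (Function.update id v u) ∈
      (H.map (Function.update id v u)).acyclicOrientations := by
  have hf : ∀ a b, Function.update id v u a = Function.update id v u b → a ≠ b →
      Function.update id v u a = u := by
    intro a b hab hne
    rcases eq_or_of_update_id_eq hab with rfl | ⟨rfl, rfl⟩ | ⟨rfl, rfl⟩
    · exact absurd rfl hne
    all_goals simp [Function.update_apply]
  have hpath : ∀ a b, Function.update id v u a = Function.update id v u b →
      ¬ TransGen D a b := by
    intro a b hab
    rcases eq_or_of_update_id_eq hab with rfl | ⟨rfl, rfl⟩ | ⟨rfl, rfl⟩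
    exacts [fun h => hD.2 ⟨a, h⟩, huv, hvu]
  have hacyc := not_hasDiCycle_map hf hpath
  exact ⟨hD.1.map hacyc, hacyc⟩

theorem ncard_acyclicOrientations_le_add [Finite V] [DecidableEq V] (h : G.Adj u v) :
    G.acyclicOrientations.ncard ≤
      (G.deleteEdges {s(u, v)}).acyclicOrientations.ncard +
        (G.contractEdge u v).acyclicOrientations.ncard := by
  set G' := G.deleteEdges {s(u, v)}
  set X := {D ∈ G'.acyclicOrientations | ¬ HasDiCycle (addArc D u v)}
  set Y := {D ∈ G'.acyclicOrientations | ¬ HasDiCycle (addArc D v u)}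
  have hcover : G.acyclicOrientations ⊆ (addArc · u v) '' X ∪ (addArc · v u) '' Y := by
    rintro D ⟨hD, hacyc⟩
    have hD' : (fun a b => D a b ∧ G'.Adj a b) ∈ G'.acyclicOrientations :=
      ⟨hD.restrict (deleteEdges_le _), not_hasDiCycle_of_le (fun _ _ => And.left) hacyc⟩
    rcases hD.total h with huv | hvu
    · have hDeq := hD.eq_addArc huv
      exact .inl ⟨_, ⟨hD', hDeq ▸ hacyc⟩, hDeq.symm⟩
    · have hDeq := hD.eq_addArc hvu
      rw [Sym2.eq_swap] at hDeq
      exact .inr ⟨_, ⟨hD', hDeq ▸ hacyc⟩, hDeq.symm⟩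
  have hmaps : ∀ D ∈ X ∩ Y,
      Relation.Map D (Function.update id v u) (Function.update id v u) ∈
        (G.contractEdge u v).acyclicOrientations := fun D ⟨⟨hD, hX⟩, _, hY⟩ =>
    map_update_mem_acyclicOrientations hD (not_transGen_of_not_hasDiCycle_addArc hY)
      (not_transGen_of_not_hasDiCycle_addArc hX)
  have hinter : (X ∩ Y).ncard ≤ (G.contractEdge u v).acyclicOrientations.ncard :=
    Set.ncard_le_ncard_of_injOn _ hmaps fun D₁ hD₁ D₂ hD₂ heq =>
      hD₁.1.1.1.eq_of_map_eq hD₂.1.1.1 (hmaps D₂ hD₂).2 heq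
  calc G.acyclicOrientations.ncard
      ≤ ((addArc · u v) '' X ∪ (addArc · v u) '' Y).ncard := Set.ncard_le_ncard hcover
    _ ≤ X.ncard + Y.ncard :=
        (Set.ncard_union_le _ _).trans (add_le_add Set.ncard_image_le Set.ncard_image_le)
    _ = (X ∪ Y).ncard + (X ∩ Y).ncard := (Set.ncard_union_add_ncard_inter _ _).symm
    _ ≤ G'.acyclicOrientations.ncard + (G.contractEdge u v).acyclicOrientations.ncard :=
        add_le_add (Set.ncard_le_ncard (Set.union_subset (Set.sep_subset _ _)
          (Set.sep_subset _ _))) hinter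

lemma ncard_edgeSet_map_le [Finite V] (G : SimpleGraph V) (f : V → W) :
    (G.map f).edgeSet.ncard ≤ G.edgeSet.ncard := by
  refine (Set.ncard_le_ncard (t := Sym2.map f '' G.edgeSet) ?_ ((Set.toFinite _).image _)).trans
    Set.ncard_image_le
  intro e he
  induction e using Sym2.ind with
  | h x y =>
    obtain ⟨-, a, b, hab, rfl, rfl⟩ := he
    exact ⟨s(a, b), hab, rfl⟩

lemma ncard_edgeSet_deleteEdges_lt [Finite V] (h : G.Adj u v) :
    (G.deleteEdges {s(u, v)}).edgeSet.ncard < G.edgeSet.ncard := by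
  rw [edgeSet_deleteEdges]
  exact Set.ncard_sdiff_singleton_lt_of_mem h

lemma ncard_edgeSet_contractEdge_lt [Finite V] [DecidableEq V] (h : G.Adj u v) :
    (G.contractEdge u v).edgeSet.ncard < G.edgeSet.ncard :=
  (ncard_edgeSet_map_le _ _).trans_lt (ncard_edgeSet_deleteEdges_lt h)

section DecidableEq

variable [DecidableEq V]

lemma Reachable.contractEdge {a b : V} (h : G.Reachable a b) :
    (G.contractEdge u v).Reachable (Function.update id v u a) (Function.update id v u b) := by
  rw [reachable_iff_reflTransGen] at h ⊢
  refine ReflTransGen.lift' _ (fun a b hab => show ReflTransGen _ _ _ from ?_) a b h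
  by_cases hf : Function.update id v u a = Function.update id v u b
  · exact hf ▸ ReflTransGen.refl (r := (G.contractEdge u v).Adj)
  refine .single ⟨hf, a, b, deleteEdges_adj.mpr ⟨hab, fun he => hf ?_⟩, rfl, rfl⟩
  rcases Sym2.eq_iff.mp he with ⟨rfl, rfl⟩ | ⟨rfl, rfl⟩ <;> simp [Function.update_apply]

lemma reachable_update_id (h : G.Adj u v) (a : V) : G.Reachable a (Function.update id v u a) := by
  rcases eq_or_ne a v with rfl | ha
  · simpa using h.symm.reachable
  · simp [ha]

lemma Reachable.of_contractEdge (h : G.Adj u v) {x y : V}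
    (hxy : (G.contractEdge u v).Reachable x y) : G.Reachable x y := by
  rw [reachable_iff_reflTransGen] at hxy
  induction hxy with
  | refl => rfl
  | tail _ hyz ih =>
    obtain ⟨-, c, d, hcd, rfl, rfl⟩ := hyz
    exact ih.trans ((reachable_update_id h c).symm.trans
      ((deleteEdges_le _ hcd).reachable.trans (reachable_update_id h d)))

lemma reachable_contractEdge_iff (h : G.Adj u v) {a b : V} :
    (G.contractEdge u v).Reachable (Function.update id v u a) (Function.update id v u b) ↔
      G.Reachable a b :=
  ⟨fun hab => (reachable_update_id h a).trans ((hab.of_contractEdge h).trans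
    (reachable_update_id h b).symm), Reachable.contractEdge⟩

lemma eq_of_contractEdge_reachable (h : G.Adj u v) {b : V}
    (hvb : (G.contractEdge u v).Reachable v b) : v = b := by
  rw [reachable_iff_reflTransGen] at hvb
  rcases hvb.cases_head with hvb | ⟨c, ⟨-, a, _, _, ha, -⟩, -⟩
  · exact hvb
  · rw [Function.update_apply] at ha
    split_ifs at ha with hav
    exacts [(h.ne ha).elim, (hav ha).elim]

theorem card_connectedComponent_contractEdge [Finite V] (h : G.Adj u v) :
    Nat.card (G.contractEdge u v).ConnectedComponent = Nat.card G.ConnectedComponent + 1 := by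
  set f := Function.update id v u
  let φ : Option G.ConnectedComponent → (G.contractEdge u v).ConnectedComponent :=
    fun C => C.elim ((G.contractEdge u v).connectedComponentMk v)
      (ConnectedComponent.lift (fun a => (G.contractEdge u v).connectedComponentMk (f a))
        fun _ _ p _ => ConnectedComponent.sound p.reachable.contractEdge)
  have hfv (a : V) : f a ≠ v := by
    rw [show f a = _ from Function.update_apply id v u a]
    split_ifs with hav
    exacts [h.ne, hav]
  rw [← Finite.card_option]
  refine (Nat.card_eq_of_bijective φ ⟨?_, fun C => ?_⟩).symm
  · rintro (_ | C₁) (_ | C₂) hC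
    · rfl
    · induction C₂ using ConnectedComponent.ind with | h b =>
      exact absurd (eq_of_contractEdge_reachable h (ConnectedComponent.exact hC)).symm (hfv b)
    · induction C₁ using ConnectedComponent.ind with | h a =>
      exact absurd (eq_of_contractEdge_reachable h (ConnectedComponent.exact hC.symm)).symm (hfv a)
    · induction C₁ using ConnectedComponent.ind with | h a =>
      induction C₂ using ConnectedComponent.ind with | h b =>
      exact congrArg some (ConnectedComponent.sound
        ((reachable_contractEdge_iff h).mp (ConnectedComponent.exact hC)))
  · induction C using ConnectedComponent.ind with | h x =>
    rcases eq_or_ne x v with rfl | hx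
    · exact ⟨none, rfl⟩
    · exact ⟨some (G.connectedComponentMk x), by simp [φ, f, hx]⟩

end DecidableEq

theorem deleteEdges_contractEdge_induction [Finite V] [DecidableEq V]
    {P : SimpleGraph V → Prop} (bot : P ⊥)
    (step : ∀ (G : SimpleGraph V) (u v : V), G.Adj u v →
      P (G.deleteEdges {s(u, v)}) → P (G.contractEdge u v) → P G)
    (G : SimpleGraph V) : P G := by
  induction hm : G.edgeSet.ncard using Nat.strong_induction_on generalizing G with
  | _ m ih =>
  rcases eq_or_ne G ⊥ with rfl | hG
  · exact bot
  obtain ⟨u, v, h⟩ := ne_bot_iff_exists_adj.mp hG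
  exact step G u v h (ih _ (hm ▸ ncard_edgeSet_deleteEdges_lt h) _ rfl)
    (ih _ (hm ▸ ncard_edgeSet_contractEdge_lt h) _ rfl)

lemma card_connectedComponent_le [Finite V] (G : SimpleGraph V) :
    Nat.card G.ConnectedComponent ≤ Nat.card V :=
  Nat.card_le_card_of_surjective _ Quot.mk_surjective

theorem card_le_ncard_edgeSet_add_card_connectedComponent [Finite V] (G : SimpleGraph V) :
    Nat.card V ≤ G.edgeSet.ncard + Nat.card G.ConnectedComponent := by
  classical
  induction G using deleteEdges_contractEdge_induction with
  | bot =>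
    have : Nat.card V ≤ Nat.card (⊥ : SimpleGraph V).ConnectedComponent :=
      Nat.card_le_card_of_injective _
        fun a b hab => reachable_bot.mp (ConnectedComponent.exact hab)
    omega
  | step G u v h _ ih =>
    have := card_connectedComponent_contractEdge h
    have := ncard_edgeSet_contractEdge_lt h
    omega

theorem ncard_acyclicOrientations_le_sum_choose [Finite V] (G : SimpleGraph V) :
    G.acyclicOrientations.ncard ≤
      ∑ i ∈ Finset.range (Nat.card V - Nat.card G.ConnectedComponent + 1),
        G.edgeSet.ncard.choose i := by
  classical
  induction G using deleteEdges_contractEdge_induction with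
  | bot =>
    have hsub : (⊥ : SimpleGraph V).acyclicOrientations.ncard ≤ 1 :=
      (Set.ncard_le_one).mpr fun D₁ hD₁ D₂ hD₂ => funext₂ fun a b =>
        propext (iff_of_false (fun h => hD₁.1.adj h) (fun h => hD₂.1.adj h))
    rw [Finset.sum_range_succ', Nat.choose_zero_right]
    omega
  | step G u v h ihdel ihcon =>
    have hcon := card_connectedComponent_contractEdge h
    have hconV := card_connectedComponent_le (G.contractEdge u v)
    have hdel := ConnectedComponent.card_le_card_of_le (deleteEdges_le (G := G) {s(u, v)})
    obtain ⟨m, hm⟩ : ∃ m, G.edgeSet.ncard = m + 1 :=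
      Nat.exists_eq_add_one_of_ne_zero (ncard_edgeSet_deleteEdges_lt h).ne_bot
    obtain ⟨t, ht⟩ : ∃ t, Nat.card V - Nat.card G.ConnectedComponent = t + 1 :=
      ⟨Nat.card V - Nat.card G.ConnectedComponent - 1, by omega⟩
    have hmdel := ncard_edgeSet_deleteEdges_lt h
    have hmcon := ncard_edgeSet_contractEdge_lt h
    rw [hm, ht, sum_range_choose_succ_succ]
    calc G.acyclicOrientations.ncard
        ≤ (G.deleteEdges {s(u, v)}).acyclicOrientations.ncard +
            (G.contractEdge u v).acyclicOrientations.ncard := ncard_acyclicOrientations_le_add h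
      _ ≤ _ := add_le_add (ihdel.trans (sum_range_choose_mono (by omega) (by omega)))
          (ihcon.trans (sum_range_choose_mono (by omega) (by omega)))

end SimpleGraph

section Encoding

open SimpleGraph

variable {G : SimpleGraph V} {ρ : Sym2 V → V × V}

lemma arcs_iff {d : G.edgeSet → Bool} {a b : V} :
    arcs G ρ d a b ↔
      ∃ e, (d e = false ∧ ρ e = (a, b)) ∨ (d e = true ∧ ρ e = (b, a)) := by
  simp [arcs, arcsOn]

lemma val_eq_of_rho_eq (hρ : ∀ e ∈ G.edgeSet, Sym2.mk.uncurry (ρ e) = e)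
    {e : G.edgeSet} {a b : V} (he : ρ e = (a, b)) : e.val = s(a, b) := by
  rw [← hρ e e.2, he]; rfl

lemma exists_rho_eq (hρ : ∀ e ∈ G.edgeSet, Sym2.mk.uncurry (ρ e) = e)
    {a b : V} (h : G.Adj a b) : ∃ e : G.edgeSet, ρ e = (a, b) ∨ ρ e = (b, a) := by
  refine ⟨⟨s(a, b), h⟩, ?_⟩
  have : s((ρ s(a, b)).1, (ρ s(a, b)).2) = s(a, b) := hρ _ h
  simpa [Prod.ext_iff, Sym2.eq_iff] using this

lemma arcs_rho_iff (hρ : ∀ e ∈ G.edgeSet, Sym2.mk.uncurry (ρ e) = e)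
    (d : G.edgeSet → Bool) {e : G.edgeSet} {a b : V} (he : ρ e = (a, b)) :
    (arcs G ρ d a b ↔ d e = false) ∧ (arcs G ρ d b a ↔ d e = true) := by
  have hab : a ≠ b := G.ne_of_adj (by simpa [val_eq_of_rho_eq hρ he] using e.2)
  have huniq : ∀ e' : G.edgeSet, ρ e' = (a, b) ∨ ρ e' = (b, a) → e' = e := by
    rintro e' (he' | he') <;> apply Subtype.ext
    · rw [val_eq_of_rho_eq hρ he', val_eq_of_rho_eq hρ he]
    · rw [val_eq_of_rho_eq hρ he', val_eq_of_rho_eq hρ he, Sym2.eq_swap]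
  simp only [arcs_iff]
  grind

lemma isOrientation_arcs (hρ : ∀ e ∈ G.edgeSet, Sym2.mk.uncurry (ρ e) = e)
    (d : G.edgeSet → Bool) : G.IsOrientation (arcs G ρ d) := by
  have adj : ∀ ⦃a b⦄, arcs G ρ d a b → G.Adj a b := by
    rintro a b ⟨e, -, ⟨-, he⟩ | ⟨-, he⟩⟩
    · simpa [val_eq_of_rho_eq hρ he] using e.2
    · exact (by simpa [val_eq_of_rho_eq hρ he] using e.2 : G.Adj b a).symm
  refine ⟨adj, fun a b hab => ?_, fun a b h => ?_⟩
  · obtain ⟨e, he | he⟩ := exists_rho_eq hρ (adj hab) <;> grind [arcs_rho_iff hρ d he]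
  · obtain ⟨e, he | he⟩ := exists_rho_eq hρ h <;> grind [arcs_rho_iff hρ d he]

lemma arcs_injective (hρ : ∀ e ∈ G.edgeSet, Sym2.mk.uncurry (ρ e) = e) :
    Function.Injective (arcs G ρ) := by
  intro d d' h
  funext e
  have hd := (arcs_rho_iff hρ d (e := e) rfl).1
  have hd' := (arcs_rho_iff hρ d' (e := e) rfl).1
  rw [h] at hd
  grind

lemma image_arcs (hρ : ∀ e ∈ G.edgeSet, Sym2.mk.uncurry (ρ e) = e) :
    arcs G ρ '' {d | ¬ HasDiCycle (arcs G ρ d)} = G.acyclicOrientations := by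
  ext D
  refine ⟨?_, fun ⟨hD, hacyc⟩ => ?_⟩
  · rintro ⟨d, hd, rfl⟩
    exact ⟨isOrientation_arcs hρ d, hd⟩
  · classical
    let d : G.edgeSet → Bool := fun e => !decide (D (ρ e).1 (ρ e).2)
    have hdD : arcs G ρ d = D := by
      funext a b
      by_cases h : G.Adj a b
      · obtain ⟨e, he | he⟩ := exists_rho_eq hρ h <;>
          grind [arcs_rho_iff hρ d he, hD.iff_not h]
      · exact propext (iff_of_false (fun hab => h ((isOrientation_arcs hρ d).adj hab))
          (fun hab => h (hD.adj hab)))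
    exact ⟨d, show ¬ HasDiCycle (arcs G ρ d) by rwa [hdD], hdD⟩

lemma ncard_setOf_not_hasDiCycle_arcs (hρ : ∀ e ∈ G.edgeSet, Sym2.mk.uncurry (ρ e) = e) :
    {d | ¬ HasDiCycle (arcs G ρ d)}.ncard = G.acyclicOrientations.ncard := by
  rw [← image_arcs hρ, Set.ncard_image_of_injective _ (arcs_injective hρ)]

end Encoding

end

theorem acyclic_orientations_bound_general {V : Type*} [Fintype V] (G : SimpleGraph V)
    (ρ : Sym2 V → V × V) (hρ : ∀ e ∈ G.edgeSet, Sym2.mk.uncurry (ρ e) = e)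
    (n m k : ℕ) (hn : Fintype.card V = n) (hm : Nat.card G.edgeSet = m)
    (hk : Nat.card G.ConnectedComponent = k) :
    ({d : G.edgeSet → Bool | ¬ HasDiCycle (arcs G ρ d)}.ncard : ℝ) ≤
      ((m : ℝ) * Real.exp 1 / ((n : ℝ) - (k : ℝ))) ^ (n - k) := by
  rw [← Nat.card_eq_fintype_card] at hn
  rw [Nat.card_coe_set_eq] at hm
  subst hn hm hk
  have hrank := G.card_le_ncard_edgeSet_add_card_connectedComponent
  rw [ncard_setOf_not_hasDiCycle_arcs hρ, ← Nat.cast_sub G.card_connectedComponent_le]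
  calc (G.acyclicOrientations.ncard : ℝ)
      ≤ ∑ i ∈ Finset.range (Nat.card V - Nat.card G.ConnectedComponent + 1),
          (G.edgeSet.ncard.choose i : ℝ) := by
        exact_mod_cast G.ncard_acyclicOrientations_le_sum_choose
    _ ≤ _ := sum_range_choose_le_pow (by omega)

/-- a graph with `n` vertices, `m ≥ 1` edges and `k` connected components
has at most `(m·e/(n−k))^(n−k)` acyclic orientations. -/
theorem acyclic_orientations_bound {V : Type*} [Fintype V] (G : SimpleGraph V)
    (ρ : Sym2 V → V × V) (hρ : ∀ e ∈ G.edgeSet, Sym2.mk.uncurry (ρ e) = e)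
    (n m k : ℕ) (hn : Fintype.card V = n) (hm : Nat.card G.edgeSet = m) (hm1 : 1 ≤ m)
    (hk : Nat.card G.ConnectedComponent = k) :
    ({d : G.edgeSet → Bool | ¬ HasDiCycle (arcs G ρ d)}.ncard : ℝ) ≤
      ((m : ℝ) * Real.exp 1 / ((n : ℝ) - (k : ℝ))) ^ (n - k) :=
  acyclic_orientations_bound_general G ρ hρ n m k hn hm hk
end
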